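/- arXiv:2301.12851 — 4 statements merged into one kernel-verified Lean document; each statement's English description precedes it below -/
import Mathlib

section
/- Let Σ be an alphabet, L a language over Σ, and M ⊆ Σ a set of marker letters that letter-marks L. Then L is synchronizing: for every k ∈ ℕ, no word of L^k has a prefix belonging to L^(k+1). -/
open scoped Classical

/-- `M` letter-marks `L`: every word of `L` contains exactly one occurrence
of a letter from `M`. -/
def LetterMarks {σ : Type*} (M : Set σ) (L : Language σ) : Prop :=
  ∀ w ∈ L, w.countP (fun a => decide (a ∈ M)) = 1

/-- `L` is synchronizing: for every `k`, no word of `L ^ k` has a prefix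
belonging to `L ^ (k + 1)`. -/
def Synchronizing {σ : Type*} (L : Language σ) : Prop :=
  ∀ k : ℕ, ∀ w ∈ L ^ k, ∀ v ∈ L ^ (k + 1), ¬ v <+: w

theorem countP_of_mem_pow {σ : Type*} (M : Set σ) (L : Language σ)
    (hM : LetterMarks M L) {k : ℕ} {w : List σ} (hw : w ∈ L ^ k) :
    w.countP (fun a => decide (a ∈ M)) = k := by
  obtain ⟨S, rfl, hlen, hmem⟩ := Language.mem_pow.mp hw
  subst hlen
  rw [List.countP_flatten]
  rw [show S.length = (S.map (fun l => l.countP (fun a => decide (a ∈ M)))).length by simp]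
  have : ∀ x ∈ S.map (fun l => l.countP (fun a => decide (a ∈ M))), x = 1 := by
    intro x hx
    simp only [List.mem_map] at hx
    obtain ⟨l, hl, rfl⟩ := hx
    exact hM l (hmem l hl)
  rw [List.sum_eq_card_nsmul _ 1 this]
  simp

/-- If some set of marker letters `M` letter-marks `L`, then `L` is
synchronizing. -/
theorem synchronizing_of_letterMarks {σ : Type*} (M : Set σ) (L : Language σ)
    (hM : LetterMarks M L) : Synchronizing L := by
  intro k w hw v hv hpre
  have h1 := countP_of_mem_pow M L hM hw
  have h2 := countP_of_mem_pow M L hM hv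
  have := hpre.countP_le (p := fun a => decide (a ∈ M))
  omega
end

section
/- For every regular expression R over an alphabet α built from the constructors ∅, ε, single letters, union, concatenation, and Kleene star, let m denote the number of occurrences of single-letter constructors in R. Then there exists a nondeterministic finite automaton with at most m + 1 states whose accepted language equals the language of R. -/
/-- The number of occurrences of single-letter (char) constructors in a
regular expression. -/
def letterCount {α : Type} : RegularExpression α → ℕ
  | RegularExpression.zero => 0
  | RegularExpression.epsilon => 0
  | RegularExpression.char _ => 1
  | RegularExpression.plus r s => letterCount r + letterCount s
  | RegularExpression.comp r s => letterCount r + letterCount s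
  | RegularExpression.star r => letterCount r

namespace NFAGlushkov

open Computability

variable {α : Type} {σ : Type}

inductive Path (M : NFA α σ) : σ → List α → σ → Prop
  | nil (p : σ) : Path M p [] p
  | cons {p r q : σ} {a : α} {w : List α} :
      r ∈ M.step p a → Path M r w q → Path M p (a :: w) q

theorem Path.append {M : NFA α σ} {p r q : σ} {u v : List α} (h1 : Path M p u r) :
    Path M r v q → Path M p (u ++ v) q := by
  induction h1 with
  | nil => exact id
  | cons hstep _ ih => exact fun h2 => Path.cons hstep (ih h2)

theorem path_cons_iff {M : NFA α σ} {p q : σ} {a : α} {w : List α} :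
    Path M p (a :: w) q ↔ ∃ r ∈ M.step p a, Path M r w q := by
  constructor
  · intro h; cases h with
    | cons hstep htail => exact ⟨_, hstep, htail⟩
  · rintro ⟨r, hr, h⟩; exact Path.cons hr h

theorem mem_evalFrom_iff {M : NFA α σ} :
    ∀ (w : List α) (S : Set σ) (q : σ), q ∈ M.evalFrom S w ↔ ∃ p ∈ S, Path M p w q := by
  intro w
  induction w with
  | nil =>
    intro S q
    simp only [NFA.evalFrom_nil]
    constructor
    · intro h; exact ⟨q, h, Path.nil q⟩
    · rintro ⟨p, hp, hpath⟩; cases hpath; exact hp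
  | cons a w ih =>
    intro S q
    have : M.evalFrom S (a :: w) = M.evalFrom (M.stepSet S a) w := rfl
    rw [this, ih]
    constructor
    · rintro ⟨p, hp, hpath⟩
      rcases M.mem_stepSet.mp hp with ⟨t, ht, hstep⟩
      exact ⟨t, ht, Path.cons hstep hpath⟩
    · rintro ⟨p, hp, hpath⟩
      rcases path_cons_iff.mp hpath with ⟨r, hr, htail⟩
      exact ⟨r, M.mem_stepSet.mpr ⟨p, hp, hr⟩, htail⟩

theorem mem_accepts_iff {M : NFA α σ} {w : List α} :
    w ∈ M.accepts ↔ ∃ p ∈ M.start, ∃ q ∈ M.accept, Path M p w q := by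
  rw [NFA.mem_accepts]
  constructor
  · rintro ⟨q, hq, hmem⟩
    rcases (mem_evalFrom_iff w M.start q).mp hmem with ⟨p, hp, hpath⟩
    exact ⟨p, hp, q, hq, hpath⟩
  · rintro ⟨p, hp, q, hq, hpath⟩
    exact ⟨q, hq, (mem_evalFrom_iff w M.start q).mpr ⟨p, hp, hpath⟩⟩

theorem accepts_iff_path {Q : Type} {M : NFA α (Option Q)} (hs : M.start = {none})
    {w : List α} : w ∈ M.accepts ↔ ∃ q ∈ M.accept, Path M none w q := by
  rw [mem_accepts_iff, hs]
  simp

theorem path_to_none {Q : Type} {M : NFA α (Option Q)}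
    (hni : ∀ (q : Option Q) (a : α), none ∉ M.step q a) {p : Option Q} {w : List α}
    (h : Path M p w none) : p = none ∧ w = [] := by
  have gen : ∀ {s : Option Q} {v : List α} {t : Option Q}, Path M s v t → t = none →
      s = none ∧ v = [] := by
    intro s v t hp
    induction hp with
    | nil => intro h; exact ⟨h, rfl⟩
    | cons hstep' _ ih =>
      intro h
      rcases ih h with ⟨rfl, rfl⟩
      exact absurd hstep' (hni _ _)
  exact gen h rfl

theorem none_not_mem_image {Q Q' : Type} (f : Q → Q') {S : Set (Option Q)} (hS : none ∉ S) :
    (none : Option Q') ∉ Option.map f '' S := by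
  rintro ⟨y, hy, h⟩
  cases y with
  | none => exact hS hy
  | some y' => simp at h

theorem image_some_iff {Q Q' : Type} (f : Q → Q') {S : Set (Option Q)} (hS : none ∉ S)
    {x : Option Q'} : x ∈ Option.map f '' S ↔ ∃ y, some y ∈ S ∧ x = some (f y) := by
  constructor
  · rintro ⟨y, hy, rfl⟩
    cases y with
    | none => exact absurd hy hS
    | some y' => exact ⟨y', hy, rfl⟩
  · rintro ⟨y, hy, rfl⟩
    exact ⟨some y, hy, rfl⟩

/-! ### Union -/

def plusStep {Q1 Q2 : Type} (M1 : NFA α (Option Q1)) (M2 : NFA α (Option Q2)) :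
    Option (Q1 ⊕ Q2) → α → Set (Option (Q1 ⊕ Q2))
  | none, a => (Option.map Sum.inl '' M1.step none a) ∪ (Option.map Sum.inr '' M2.step none a)
  | some (Sum.inl p), a => Option.map Sum.inl '' M1.step (some p) a
  | some (Sum.inr p), a => Option.map Sum.inr '' M2.step (some p) a

def plusAccept {Q1 Q2 : Type} (M1 : NFA α (Option Q1)) (M2 : NFA α (Option Q2)) :
    Set (Option (Q1 ⊕ Q2)) :=
  {q | match q with
    | none => none ∈ M1.accept ∨ none ∈ M2.accept
    | some (Sum.inl p) => some p ∈ M1.accept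
    | some (Sum.inr p) => some p ∈ M2.accept}

theorem plus_aux {Q1 Q2 : Type} (M1 : NFA α (Option Q1)) (M2 : NFA α (Option Q2))
    (hs1 : M1.start = {none}) (hn1 : ∀ q a, none ∉ M1.step q a)
    (hs2 : M2.start = {none}) (hn2 : ∀ q a, none ∉ M2.step q a) :
    ∃ M : NFA α (Option (Q1 ⊕ Q2)), M.start = {none} ∧ (∀ q a, none ∉ M.step q a) ∧
      M.accepts = M1.accepts + M2.accepts := by
  refine ⟨⟨plusStep M1 M2, {none}, plusAccept M1 M2⟩, rfl, ?_, ?_⟩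
  · rintro (_ | p | p) a
    · rintro (h | h)
      · exact none_not_mem_image _ (hn1 _ _) h
      · exact none_not_mem_image _ (hn2 _ _) h
    · exact fun h => none_not_mem_image _ (hn1 _ _) h
    · exact fun h => none_not_mem_image _ (hn2 _ _) h
  · set M : NFA α (Option (Q1 ⊕ Q2)) := ⟨plusStep M1 M2, {none}, plusAccept M1 M2⟩ with hM
    have E1 : ∀ {p w q}, Path M1 p w q → Path M (Option.map Sum.inl p) w (Option.map Sum.inl q) := by
      intro p w q h
      induction h with
      | nil => exact Path.nil _
      | @cons p' r' q' a' w' hstep htail ih =>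
        refine Path.cons ?_ ih
        cases p' with
        | none => exact Or.inl (Set.mem_image_of_mem _ hstep)
        | some x => exact Set.mem_image_of_mem _ hstep
    have E2 : ∀ {p w q}, Path M2 p w q → Path M (Option.map Sum.inr p) w (Option.map Sum.inr q) := by
      intro p w q h
      induction h with
      | nil => exact Path.nil _
      | @cons p' r' q' a' w' hstep htail ih =>
        refine Path.cons ?_ ih
        cases p' with
        | none => exact Or.inr (Set.mem_image_of_mem _ hstep)
        | some x => exact Set.mem_image_of_mem _ hstep
    have D1 : ∀ {s w q}, Path M s w q → ∀ p, s = some (Sum.inl p) →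
        ∃ q', q = some (Sum.inl q') ∧ Path M1 (some p) w (some q') := by
      intro s w q h
      induction h with
      | nil => exact fun p hp => ⟨p, hp, Path.nil _⟩
      | cons hstep _ ih =>
        rintro p rfl
        rcases (image_some_iff _ (hn1 _ _)).mp hstep with ⟨y, hy, rfl⟩
        rcases ih y rfl with ⟨q', rfl, hp⟩
        exact ⟨q', rfl, Path.cons hy hp⟩
    have D2 : ∀ {s w q}, Path M s w q → ∀ p, s = some (Sum.inr p) →
        ∃ q', q = some (Sum.inr q') ∧ Path M2 (some p) w (some q') := by
      intro s w q h
      induction h with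
      | nil => exact fun p hp => ⟨p, hp, Path.nil _⟩
      | cons hstep _ ih =>
        rintro p rfl
        rcases (image_some_iff _ (hn2 _ _)).mp hstep with ⟨y, hy, rfl⟩
        rcases ih y rfl with ⟨q', rfl, hp⟩
        exact ⟨q', rfl, Path.cons hy hp⟩
    ext w
    rw [accepts_iff_path rfl, Language.mem_add]
    constructor
    · rintro ⟨q, hq, hpath⟩
      cases hpath with
      | nil =>
        rcases hq with h | h
        · exact Or.inl ((accepts_iff_path hs1).mpr ⟨none, h, Path.nil _⟩)
        · exact Or.inr ((accepts_iff_path hs2).mpr ⟨none, h, Path.nil _⟩)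
      | cons hstep htail =>
        rcases hstep with h | h
        · rcases (image_some_iff _ (hn1 _ _)).mp h with ⟨y, hy, rfl⟩
          rcases D1 htail y rfl with ⟨q', rfl, hp⟩
          exact Or.inl ((accepts_iff_path hs1).mpr ⟨some q', hq, Path.cons hy hp⟩)
        · rcases (image_some_iff _ (hn2 _ _)).mp h with ⟨y, hy, rfl⟩
          rcases D2 htail y rfl with ⟨q', rfl, hp⟩
          exact Or.inr ((accepts_iff_path hs2).mpr ⟨some q', hq, Path.cons hy hp⟩)
    · rintro (h | h)
      · rcases (accepts_iff_path hs1).mp h with ⟨q, hq, hpath⟩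
        refine ⟨Option.map Sum.inl q, ?_, E1 hpath⟩
        cases q with
        | none => exact Or.inl hq
        | some x => exact hq
      · rcases (accepts_iff_path hs2).mp h with ⟨q, hq, hpath⟩
        refine ⟨Option.map Sum.inr q, ?_, E2 hpath⟩
        cases q with
        | none => exact Or.inr hq
        | some x => exact hq

/-! ### Concatenation -/

def compStep {Q1 Q2 : Type} (M1 : NFA α (Option Q1)) (M2 : NFA α (Option Q2)) :
    Option (Q1 ⊕ Q2) → α → Set (Option (Q1 ⊕ Q2))
  | none, a => (Option.map Sum.inl '' M1.step none a) ∪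
      {x | none ∈ M1.accept ∧ x ∈ Option.map Sum.inr '' M2.step none a}
  | some (Sum.inl p), a => (Option.map Sum.inl '' M1.step (some p) a) ∪
      {x | some p ∈ M1.accept ∧ x ∈ Option.map Sum.inr '' M2.step none a}
  | some (Sum.inr p), a => Option.map Sum.inr '' M2.step (some p) a

def compAccept {Q1 Q2 : Type} (M1 : NFA α (Option Q1)) (M2 : NFA α (Option Q2)) :
    Set (Option (Q1 ⊕ Q2)) :=
  {q | match q with
    | none => none ∈ M1.accept ∧ none ∈ M2.accept
    | some (Sum.inl p) => some p ∈ M1.accept ∧ none ∈ M2.accept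
    | some (Sum.inr p) => some p ∈ M2.accept}

theorem comp_aux {Q1 Q2 : Type} (M1 : NFA α (Option Q1)) (M2 : NFA α (Option Q2))
    (hs1 : M1.start = {none}) (hn1 : ∀ q a, none ∉ M1.step q a)
    (hs2 : M2.start = {none}) (hn2 : ∀ q a, none ∉ M2.step q a) :
    ∃ M : NFA α (Option (Q1 ⊕ Q2)), M.start = {none} ∧ (∀ q a, none ∉ M.step q a) ∧
      M.accepts = M1.accepts * M2.accepts := by
  refine ⟨⟨compStep M1 M2, {none}, compAccept M1 M2⟩, rfl, ?_, ?_⟩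
  · rintro (_ | p | p) a
    · rintro (h | ⟨-, h⟩)
      · exact none_not_mem_image _ (hn1 _ _) h
      · exact none_not_mem_image _ (hn2 _ _) h
    · rintro (h | ⟨-, h⟩)
      · exact none_not_mem_image _ (hn1 _ _) h
      · exact none_not_mem_image _ (hn2 _ _) h
    · exact fun h => none_not_mem_image _ (hn2 _ _) h
  · set M : NFA α (Option (Q1 ⊕ Q2)) := ⟨compStep M1 M2, {none}, compAccept M1 M2⟩ with hM
    have E1 : ∀ {p w q}, Path M1 p w q → Path M (Option.map Sum.inl p) w (Option.map Sum.inl q) := by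
      intro p w q h
      induction h with
      | nil => exact Path.nil _
      | @cons p' r' q' a' w' hstep htail ih =>
        refine Path.cons ?_ ih
        cases p' with
        | none => exact Or.inl (Set.mem_image_of_mem _ hstep)
        | some x => exact Or.inl (Set.mem_image_of_mem _ hstep)
    have E2 : ∀ {s w q}, Path M2 s w q → ∀ p q', s = some p → q = some q' →
        Path M (some (Sum.inr p)) w (some (Sum.inr q')) := by
      intro s w q h
      induction h with
      | nil =>
        rintro p q' rfl h
        cases h
        exact Path.nil _
      | @cons p' r' q' a' w' hstep htail ih =>
        rintro p q2 rfl rfl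
        cases r' with
        | none => exact absurd hstep (hn2 _ _)
        | some r'' =>
          exact Path.cons (Set.mem_image_of_mem _ hstep) (ih r'' q2 rfl rfl)
    have D2 : ∀ {s w q}, Path M s w q → ∀ p, s = some (Sum.inr p) →
        ∃ q', q = some (Sum.inr q') ∧ Path M2 (some p) w (some q') := by
      intro s w q h
      induction h with
      | nil => exact fun p hp => ⟨p, hp, Path.nil _⟩
      | cons hstep _ ih =>
        rintro p rfl
        rcases (image_some_iff _ (hn2 _ _)).mp hstep with ⟨y, hy, rfl⟩
        rcases ih y rfl with ⟨q', rfl, hp⟩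
        exact ⟨q', rfl, Path.cons hy hp⟩
    have D1 : ∀ {s w q}, Path M s w q → ∀ p, s = some (Sum.inl p) →
        (∃ q', q = some (Sum.inl q') ∧ Path M1 (some p) w (some q')) ∨
        (∃ u v q1 q2', w = u ++ v ∧ Path M1 (some p) u q1 ∧ q1 ∈ M1.accept ∧
          Path M2 none v (some q2') ∧ q = some (Sum.inr q2')) := by
      intro s w q h
      induction h with
      | nil => exact fun p hp => Or.inl ⟨p, hp, Path.nil _⟩
      | @cons p' r' q' a' w' hstep htail ih =>
        rintro p rfl
        rcases hstep with h | ⟨hacc, h⟩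
        · rcases (image_some_iff _ (hn1 _ _)).mp h with ⟨y, hy, rfl⟩
          rcases ih y rfl with ⟨q2, rfl, hp⟩ | ⟨u, v, q1, q2', rfl, hpu, hq1, hpv, rfl⟩
          · exact Or.inl ⟨q2, rfl, Path.cons hy hp⟩
          · exact Or.inr ⟨a' :: u, v, q1, q2', rfl, Path.cons hy hpu, hq1, hpv, rfl⟩
        · rcases (image_some_iff _ (hn2 _ _)).mp h with ⟨y, hy, rfl⟩
          rcases D2 htail y rfl with ⟨q2', rfl, hp2⟩
          exact Or.inr ⟨[], a' :: w', some p, q2', rfl, Path.nil _, hacc,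
            Path.cons hy hp2, rfl⟩
    have Dtop : ∀ {w q}, Path M none w q →
        (∃ q1, q = Option.map Sum.inl q1 ∧ Path M1 none w q1) ∨
        (∃ u v q1 q2', w = u ++ v ∧ Path M1 none u q1 ∧ q1 ∈ M1.accept ∧
          Path M2 none v (some q2') ∧ q = some (Sum.inr q2')) := by
      intro w q h
      cases h with
      | nil => exact Or.inl ⟨none, rfl, Path.nil _⟩
      | @cons p' r' q' a' w' hstep htail =>
        rcases hstep with h | ⟨hacc, h⟩
        · rcases (image_some_iff _ (hn1 _ _)).mp h with ⟨y, hy, rfl⟩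
          rcases D1 htail y rfl with ⟨q2, rfl, hp⟩ | ⟨u, v, q1, q2', rfl, hpu, hq1, hpv, rfl⟩
          · exact Or.inl ⟨some q2, rfl, Path.cons hy hp⟩
          · exact Or.inr ⟨a' :: u, v, q1, q2', rfl, Path.cons hy hpu, hq1, hpv, rfl⟩
        · rcases (image_some_iff _ (hn2 _ _)).mp h with ⟨y, hy, rfl⟩
          rcases D2 htail y rfl with ⟨q2', rfl, hp2⟩
          exact Or.inr ⟨[], a' :: w', none, q2', rfl, Path.nil _, hacc, Path.cons hy hp2, rfl⟩
    ext w
    rw [accepts_iff_path rfl, Language.mem_mul]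
    constructor
    · rintro ⟨q, hq, hpath⟩
      rcases Dtop hpath with ⟨q1, rfl, hp1⟩ | ⟨u, v, q1, q2', rfl, hpu, hq1, hpv, rfl⟩
      · cases q1 with
        | none =>
          rcases hq with ⟨h1, h2⟩
          rcases path_to_none hn1 hp1 with ⟨-, rfl⟩
          exact ⟨[], (accepts_iff_path hs1).mpr ⟨none, h1, Path.nil _⟩,
            [], (accepts_iff_path hs2).mpr ⟨none, h2, Path.nil _⟩, rfl⟩
        | some q1' =>
          rcases hq with ⟨h1, h2⟩
          exact ⟨w, (accepts_iff_path hs1).mpr ⟨some q1', h1, hp1⟩,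
            [], (accepts_iff_path hs2).mpr ⟨none, h2, Path.nil _⟩, List.append_nil w⟩
      · exact ⟨u, (accepts_iff_path hs1).mpr ⟨q1, hq1, hpu⟩,
          v, (accepts_iff_path hs2).mpr ⟨some q2', hq, hpv⟩, rfl⟩
    · rintro ⟨u, hu, v, hv, rfl⟩
      rcases (accepts_iff_path hs1).mp hu with ⟨qu, hqu, hpu⟩
      rcases (accepts_iff_path hs2).mp hv with ⟨qv, hqv, hpv⟩
      cases qv with
      | none =>
        rcases path_to_none hn2 hpv with ⟨-, rfl⟩
        refine ⟨Option.map Sum.inl qu, ?_, ?_⟩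
        · cases qu with
          | none => exact ⟨hqu, hqv⟩
          | some x => exact ⟨hqu, hqv⟩
        · rw [List.append_nil]
          exact E1 hpu
      | some qv' =>
        cases hpv with
        | @cons p' r' q' a' w' hstep2 htail2 =>
          cases r' with
          | none => exact absurd hstep2 (hn2 _ _)
          | some r'' =>
            refine ⟨some (Sum.inr qv'), hqv, (E1 hpu).append (Path.cons ?_ (E2 htail2 r'' qv' rfl rfl))⟩
            cases qu with
            | none => exact Or.inr ⟨hqu, Set.mem_image_of_mem _ hstep2⟩
            | some x => exact Or.inr ⟨hqu, Set.mem_image_of_mem _ hstep2⟩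

/-! ### Star -/

def starStep {Q1 : Type} (M1 : NFA α (Option Q1)) : Option Q1 → α → Set (Option Q1)
  | none, a => M1.step none a
  | some p, a => M1.step (some p) a ∪ {x | some p ∈ M1.accept ∧ x ∈ M1.step none a}

theorem star_aux {Q1 : Type} (M1 : NFA α (Option Q1))
    (hs1 : M1.start = {none}) (hn1 : ∀ q a, none ∉ M1.step q a) :
    ∃ M : NFA α (Option Q1), M.start = {none} ∧ (∀ q a, none ∉ M.step q a) ∧
      M.accepts = M1.accepts∗ := by
  refine ⟨⟨starStep M1, {none}, insert none M1.accept⟩, rfl, ?_, ?_⟩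
  · rintro (_ | p) a
    · exact hn1 _ _
    · rintro (h | ⟨-, h⟩)
      · exact hn1 _ _ h
      · exact hn1 _ _ h
  · set M : NFA α (Option Q1) := ⟨starStep M1, {none}, insert none M1.accept⟩ with hM
    have hnM : ∀ q a, none ∉ M.step q a := by
      rintro (_ | p) a
      · exact hn1 _ _
      · rintro (h | ⟨-, h⟩)
        · exact hn1 _ _ h
        · exact hn1 _ _ h
    have E : ∀ {p w q}, Path M1 p w q → Path M p w q := by
      intro p w q h
      induction h with
      | nil => exact Path.nil _
      | @cons p' r' q' a' w' hstep htail ih =>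
        refine Path.cons ?_ ih
        cases p' with
        | none => exact hstep
        | some x => exact Or.inl hstep
    have T : ∀ {s w q}, Path M s w q → ∀ p qa, s = some p → q = some qa →
        some qa ∈ M1.accept → ∃ u v q1, w = u ++ v ∧ Path M1 (some p) u (some q1) ∧
          some q1 ∈ M1.accept ∧ v ∈ M1.accepts∗ := by
      intro s w q h
      induction h with
      | nil =>
        rintro p qa rfl h hacc
        cases h
        exact ⟨[], [], p, rfl, Path.nil _, hacc, Language.nil_mem_kstar _⟩
      | @cons p' r' q' a' w' hstep htail ih =>
        rintro p qa rfl rfl hacc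
        rcases hstep with h | ⟨hpacc, h⟩
        · cases r' with
          | none => exact absurd h (hn1 _ _)
          | some r'' =>
            rcases ih r'' qa rfl rfl hacc with ⟨u, v, q1, rfl, hpu, hq1, hv⟩
            exact ⟨a' :: u, v, q1, rfl, Path.cons h hpu, hq1, hv⟩
        · cases r' with
          | none => exact absurd h (hn1 _ _)
          | some r'' =>
            rcases ih r'' qa rfl rfl hacc with ⟨u, v, q1, rfl, hpu, hq1, hv⟩
            refine ⟨[], a' :: (u ++ v), p, rfl, Path.nil _, hpacc, ?_⟩
            rcases Language.mem_kstar.mp hv with ⟨L, rfl, hL⟩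
            have hmem : (a' :: u) ∈ M1.accepts :=
              (accepts_iff_path hs1).mpr ⟨some q1, hq1, Path.cons h hpu⟩
            have : ((a' :: u) :: L).flatten ∈ M1.accepts∗ := by
              refine Language.join_mem_kstar ?_
              intro y hy
              rcases List.mem_cons.mp hy with rfl | hy
              · exact hmem
              · exact hL y hy
            simpa using this
    ext w
    rw [accepts_iff_path rfl]
    constructor
    · rintro ⟨q, hq, hpath⟩
      cases q with
      | none =>
        rcases path_to_none hnM hpath with ⟨-, rfl⟩
        exact Language.nil_mem_kstar _
      | some qa =>
        have hq1 : some qa ∈ M1.accept := by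
          rcases Set.mem_insert_iff.mp hq with h | h
          · exact absurd h (by simp)
          · exact h
        cases hpath with
        | @cons p' r' q' a' w' hstep htail =>
          cases r' with
          | none => exact absurd hstep (hn1 _ _)
          | some r'' =>
            rcases T htail r'' qa rfl rfl hq1 with ⟨u, v, q1, rfl, hpu, hq1', hv⟩
            rcases Language.mem_kstar.mp hv with ⟨L, rfl, hL⟩
            have hmem : (a' :: u) ∈ M1.accepts :=
              (accepts_iff_path hs1).mpr ⟨some q1, hq1', Path.cons hstep hpu⟩
            have : ((a' :: u) :: L).flatten ∈ M1.accepts∗ := by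
              refine Language.join_mem_kstar ?_
              intro y hy
              rcases List.mem_cons.mp hy with rfl | hy
              · exact hmem
              · exact hL y hy
            simpa using this
    · intro h
      rcases Language.mem_kstar.mp h with ⟨L, rfl, hL⟩
      clear h
      induction L with
      | nil => exact ⟨none, Set.mem_insert _ _, Path.nil _⟩
      | cons u L' ih =>
        have hu : u ∈ M1.accepts := hL u (List.mem_cons_self)
        have hL' : ∀ y ∈ L', y ∈ M1.accepts := fun y hy => hL y (List.mem_cons_of_mem _ hy)
        rcases ih hL' with ⟨qf, hqf, hpf⟩
        rcases (accepts_iff_path hs1).mp hu with ⟨qu, hqu, hpu⟩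
        cases qu with
        | none =>
          rcases path_to_none hn1 hpu with ⟨-, rfl⟩
          exact ⟨qf, hqf, by simpa using hpf⟩
        | some qu' =>
          cases hpu with
          | @cons p' r' q' a' w' hstep1 htail1 =>
            cases r' with
            | none => exact absurd hstep1 (hn1 _ _)
            | some r'' =>
              have PU : Path M (some r'') w' (some qu') := E htail1
              generalize hfl : L'.flatten = v at hpf ⊢
              cases hpf with
              | nil =>
                refine ⟨some qu', Set.mem_insert_of_mem _ hqu, ?_⟩
                have h2 : Path M none (a' :: w') (some qu') := Path.cons hstep1 PU
                simpa [hfl] using h2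
              | @cons pp rr qq bb vv hstep2 htail2 =>
                refine ⟨qf, hqf, ?_⟩
                have step' : rr ∈ M.step (some qu') bb := Or.inr ⟨hqu, hstep2⟩
                have h2 : Path M none ((a' :: w') ++ (bb :: vv)) qf :=
                  Path.cons hstep1 (PU.append (Path.cons step' htail2))
                simpa [hfl] using h2

/-! ### Base cases -/

theorem zero_aux : ∃ M : NFA α (Option Empty), M.start = {none} ∧
    (∀ q a, none ∉ M.step q a) ∧ M.accepts = (0 : Language α) := by
  refine ⟨⟨fun _ _ => ∅, {none}, ∅⟩, rfl, fun q a h => h, ?_⟩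
  ext w
  rw [accepts_iff_path rfl]
  simp

theorem eps_aux : ∃ M : NFA α (Option Empty), M.start = {none} ∧
    (∀ q a, none ∉ M.step q a) ∧ M.accepts = (1 : Language α) := by
  refine ⟨⟨fun _ _ => ∅, {none}, {none}⟩, rfl, fun q a h => h, ?_⟩
  ext w
  rw [accepts_iff_path rfl, Language.mem_one]
  constructor
  · rintro ⟨q, hq, hpath⟩
    cases hpath with
    | nil => rfl
    | cons hstep _ => exact absurd hstep (Set.notMem_empty _)
  · rintro rfl
    exact ⟨none, rfl, Path.nil _⟩

theorem char_aux (c : α) : ∃ M : NFA α (Option Unit), M.start = {none} ∧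
    (∀ q a, none ∉ M.step q a) ∧ M.accepts = ({[c]} : Language α) := by
  refine ⟨⟨fun q b => {x | q = none ∧ b = c ∧ x = some ()}, {none}, {some ()}⟩, rfl, ?_, ?_⟩
  · rintro q a ⟨-, -, h⟩
    cases h
  · ext w
    rw [accepts_iff_path rfl]
    constructor
    · rintro ⟨q, hq, hpath⟩
      rcases Set.mem_singleton_iff.mp hq with rfl
      cases hpath with
      | @cons p' r' q' a' w' hstep htail =>
        rcases hstep with ⟨-, rfl, rfl⟩
        cases htail with
        | nil => rfl
        | cons hstep2 _ => exact absurd hstep2.1 (by simp)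
    · rintro rfl
      exact ⟨some (), rfl, Path.cons ⟨rfl, rfl, rfl⟩ (Path.nil _)⟩

/-! ### Main auxiliary lemma -/

theorem aux (R : RegularExpression α) :
    ∃ (Q : Type) (_ : Fintype Q) (M : NFA α (Option Q)),
      Fintype.card Q ≤ letterCount R ∧ M.start = {none} ∧
      (∀ (q : Option Q) (a : α), none ∉ M.step q a) ∧ M.accepts = R.matches' := by
  induction R with
  | zero =>
    rcases zero_aux (α := α) with ⟨M, hs, hn, ha⟩
    exact ⟨Empty, inferInstance, M, by simp [letterCount], hs, hn, ha⟩
  | epsilon =>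
    rcases eps_aux (α := α) with ⟨M, hs, hn, ha⟩
    exact ⟨Empty, inferInstance, M, by simp [letterCount], hs, hn, ha⟩
  | char c =>
    rcases char_aux c with ⟨M, hs, hn, ha⟩
    exact ⟨Unit, inferInstance, M, by simp [letterCount], hs, hn, ha⟩
  | plus r s ihr ihs =>
    rcases ihr with ⟨Q1, F1, M1, hc1, hs1, hn1, ha1⟩
    rcases ihs with ⟨Q2, F2, M2, hc2, hs2, hn2, ha2⟩
    rcases plus_aux M1 M2 hs1 hn1 hs2 hn2 with ⟨M, hs, hn, ha⟩
    refine ⟨Q1 ⊕ Q2, inferInstance, M, ?_, hs, hn, ?_⟩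
    · simpa [letterCount] using Nat.add_le_add hc1 hc2
    · rw [ha, ha1, ha2]
      rfl
  | comp r s ihr ihs =>
    rcases ihr with ⟨Q1, F1, M1, hc1, hs1, hn1, ha1⟩
    rcases ihs with ⟨Q2, F2, M2, hc2, hs2, hn2, ha2⟩
    rcases comp_aux M1 M2 hs1 hn1 hs2 hn2 with ⟨M, hs, hn, ha⟩
    refine ⟨Q1 ⊕ Q2, inferInstance, M, ?_, hs, hn, ?_⟩
    · simpa [letterCount] using Nat.add_le_add hc1 hc2
    · rw [ha, ha1, ha2]
      rfl
  | star r ihr =>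
    rcases ihr with ⟨Q1, F1, M1, hc1, hs1, hn1, ha1⟩
    rcases star_aux M1 hs1 hn1 with ⟨M, hs, hn, ha⟩
    refine ⟨Q1, F1, M, by simpa [letterCount] using hc1, hs, hn, ?_⟩
    rw [ha, ha1]
    rfl

end NFAGlushkov

/-- For every regular expression `R` with `m` occurrences of single letters,
there is an NFA with at most `m + 1` states accepting the language of `R`. -/
theorem exists_nfa_of_regularExpression {α : Type} (R : RegularExpression α) :
    ∃ (Q : Type) (_ : Fintype Q) (M : NFA α Q),
      Fintype.card Q ≤ letterCount R + 1 ∧ M.accepts = R.matches' := by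
  rcases NFAGlushkov.aux R with ⟨Q, F, M, hc, -, -, ha⟩
  exact ⟨Option Q, inferInstance, M, by simpa [Fintype.card_option] using Nat.add_le_add_right hc 1, ha⟩
end

section
/- Let L₁, L₂ be languages over alphabet Σ and T₁, T₂ ⊆ Σ. Suppose T₁ letter-marks L₁, T₂ letter-marks L₂, T₁ ∩ (letters(L₂) \ T₂) = ∅, and T₂ ∩ (letters(L₁) \ T₁) = ∅. Then T₁ ∪ T₂ letter-marks L₁ ∪ L₂. -/
open scoped Classical

/-- The set of letters occurring in some word of `L`. -/
def lettersOf {σ : Type*} (L : Language σ) : Set σ :=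
  {a | ∃ w ∈ L, a ∈ w}

/-- The union of two languages. -/
def langUnion {σ : Type*} (L₁ L₂ : Language σ) : Language σ :=
  {w | w ∈ L₁ ∨ w ∈ L₂}

/-- Union case of recognizing letter-marked counting: if `T₁` letter-marks
`L₁`, `T₂` letter-marks `L₂`, and the stated disjointness conditions hold,
then `T₁ ∪ T₂` letter-marks `L₁ ∪ L₂`. -/
theorem letterMarks_union {σ : Type*} (L₁ L₂ : Language σ) (T₁ T₂ : Set σ)
    (h₁ : LetterMarks T₁ L₁) (h₂ : LetterMarks T₂ L₂)
    (hd₁ : T₁ ∩ (lettersOf L₂ \ T₂) = ∅)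
    (hd₂ : T₂ ∩ (lettersOf L₁ \ T₁) = ∅) :
    LetterMarks (T₁ ∪ T₂) (langUnion L₁ L₂) := by
  intro w hw
  rcases hw with hw | hw
  · rw [List.countP_congr (q := fun a => decide (a ∈ T₁))]
    · exact h₁ w hw
    · intro a ha
      simp only [decide_eq_true_eq]
      constructor
      · rintro (h | h)
        · exact h
        · by_contra h1
          have : a ∈ T₂ ∩ (lettersOf L₁ \ T₁) := ⟨h, ⟨w, hw, ha⟩, h1⟩
          rw [hd₂] at this; exact this
      · exact Or.inl
  · rw [List.countP_congr (q := fun a => decide (a ∈ T₂))]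
    · exact h₂ w hw
    · intro a ha
      simp only [decide_eq_true_eq]
      constructor
      · rintro (h | h)
        · by_contra h1
          have : a ∈ T₁ ∩ (lettersOf L₂ \ T₂) := ⟨h, ⟨w, hw, ha⟩, h1⟩
          rw [hd₁] at this; exact this
        · exact h
      · exact Or.inr
end

section
/- Let Σ be an alphabet containing a letter a and let L = {aa} be the singleton language containing only the two-letter word aa. Then L is synchronizing (for every k, no word of L^k has a prefix in L^(k+1)), but no set of letters M ⊆ Σ letter-marks L. -/
open scoped Classical

lemma len_mem_pow {σ : Type*} (a : σ) :
    ∀ k : ℕ, ∀ w ∈ (({[a, a]} : Language σ) ^ k), w.length = 2 * k := by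
  intro k
  induction k with
  | zero => intro w hw; simp [pow_zero] at hw; simp [hw]
  | succ n ih =>
    intro w hw
    rw [pow_succ] at hw
    obtain ⟨u, hu, v, hv, rfl⟩ := hw
    have hv' : v = [a, a] := hv
    simp [ih u hu, hv', Nat.mul_succ]

/-- The language `{aa}` is synchronizing but not letter-marked by any set of
letters: letter-marked counting is a strict subclass of synchronizing
counting. -/
theorem aa_synchronizing_not_letterMarked {σ : Type*} (a : σ) :
    Synchronizing ({[a, a]} : Language σ) ∧
    ∀ M : Set σ, ¬ LetterMarks M ({[a, a]} : Language σ) := by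
  constructor
  · intro k w hw v hv hpre
    have h1 := len_mem_pow a k w hw
    have h2 := len_mem_pow a (k + 1) v hv
    have := hpre.length_le
    omega
  · intro M hM
    have h := hM [a, a] rfl
    by_cases ha : a ∈ M <;> simp [ha] at h
end
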